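/- arXiv:1911.06770 — 6 statements merged into one kernel-verified Lean document; each statement's English description precedes it below -/
import Mathlib

section
/- Let φ : ℝ → ℝ be Lipschitz continuous and J̄ ≥ 0 with J̄ < φ(1). Then there exists δ ∈ (0,1) such that every solution G : [0,∞) → ℝ of the two-state grass–forest generalized Kolmogorov equation G' = (1−G)φ(G) − J̄ G(1−G) with G(0) ∈ (1−δ, 1] is nondecreasing, remains in (1−δ,1], and satisfies G(t) → 1 as t → ∞; i.e., the all-grass equilibrium is locally asymptotically stable when the forest birth rate is below the forest mortality at full grass cover. -/
open Set Filter Topology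

/-!
Write `G' = (1 - G) f(G)` with `f x = φ x - J̄ x`, so that `f 1 > 0`; by continuity `f ≥ f 1 / 2`
on some `[1 - δ, 1]`. The level `1` is an equilibrium, and since `|(1 - G) f(G)| ≤ M |G - 1|` on
compact time intervals, a Grönwall barrier keeps `G ≤ 1`. Below `1` the vector field is positive on
`(1 - δ, 1)`, so no level `G 0 - ε` can be crossed downwards and `G ≥ G 0`. Trapped in
`(1 - δ, 1]`, the solution is nondecreasing, and `1 - G` decays like `exp (-f 1 t / 2)`.
-/

theorem nonpos_of_hasDerivWithinAt_le_mul_of_pos {h h' : ℝ → ℝ} {a b M : ℝ}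
    (hc : ContinuousOn h (Icc a b)) (hd : ∀ x ∈ Ico a b, HasDerivWithinAt h (h' x) (Ici x) x)
    (ha : h a ≤ 0) (bound : ∀ x ∈ Ico a b, 0 < h x → h' x ≤ M * h x) :
    ∀ x ∈ Icc a b, h x ≤ 0 := by
  intro x hx
  -- `ε e^{(M+1)(x-a)}` is positive and a strict supersolution, so `h` never reaches it.
  have barrier : ∀ ε > 0, h x ≤ gronwallBound ε (M + 1) 0 (x - a) := by
    intro ε hε
    refine image_le_of_deriv_right_lt_deriv_boundary hc hd ?_
      (hasDerivAt_gronwallBound_shift ε (M + 1) 0 · a) (fun y hy hyB => ?_) hx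
    · rw [sub_self, gronwallBound_x0]
      linarith
    · have hB : 0 < gronwallBound ε (M + 1) 0 (y - a) := by
        rw [gronwallBound_ε0]
        positivity
      rw [← hyB] at hB ⊢
      linarith [bound y hy hB]
  have hlim : Tendsto (fun ε => gronwallBound ε (M + 1) 0 (x - a)) (𝓝[>] 0) (𝓝 0) := by
    simp only [gronwallBound_ε0]
    simpa using ((tendsto_id (x := 𝓝 (0 : ℝ))).mul_const _).mono_left nhdsWithin_le_nhds
  exact ge_of_tendsto hlim (eventually_nhdsWithin_of_forall barrier)

theorem exists_Icc_half_le_of_continuousAt {g : ℝ → ℝ} {a : ℝ} (hg : ContinuousAt g a)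
    (ha : 0 < g a) : ∃ δ ∈ Ioo (0 : ℝ) 1, ∀ x ∈ Icc (a - δ) a, g a / 2 ≤ g x := by
  obtain ⟨ε, hε, hball⟩ :=
    Metric.eventually_nhds_iff.1 (continuousAt_const.eventually_lt hg (half_lt_self ha))
  refine ⟨min (ε / 2) (1 / 2), ⟨by positivity, by linarith [min_le_right (ε / 2) (1 / 2)]⟩,
    fun x hx => (hball ?_).le⟩
  rw [Real.dist_eq, abs_lt]
  constructor <;> linarith [hx.1, hx.2, min_le_left (ε / 2) (1 / 2)]

section OneSubMul

variable {f G : ℝ → ℝ}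

theorem le_one_of_hasDerivWithinAt_one_sub_mul (hf : Continuous f)
    (hG : ∀ t ∈ Ici (0 : ℝ), HasDerivWithinAt G ((1 - G t) * f (G t)) (Ici 0) t)
    (h0 : G 0 ≤ 1) {t : ℝ} (ht : 0 ≤ t) : G t ≤ 1 := by
  have hcont : ContinuousOn G (Icc 0 t) :=
    fun s hs => (hG s hs.1).continuousWithinAt.mono Icc_subset_Ici_self
  obtain ⟨M, hM⟩ := isCompact_Icc.exists_bound_of_continuousOn (hf.comp_continuousOn hcont)
  have key := nonpos_of_hasDerivWithinAt_le_mul_of_pos (h := fun s => G s - 1) (M := M)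
    (hcont.sub continuousOn_const)
    (fun s hs => ((hG s hs.1).mono (Ici_subset_Ici.2 hs.1)).sub_const 1) (by linarith)
    (fun s hs hpos => ?_) t ⟨ht, le_rfl⟩
  · linarith
  · have hfM := hM s (Ico_subset_Icc_self hs)
    rw [Function.comp_apply, Real.norm_eq_abs, abs_le] at hfM
    calc (1 - G s) * f (G s) = (G s - 1) * -f (G s) := by ring
      _ ≤ (G s - 1) * M := mul_le_mul_of_nonneg_left (by linarith [hfM.1]) hpos.le
      _ = M * (G s - 1) := mul_comm _ _

theorem apply_zero_le_apply_of_hasDerivWithinAt_one_sub_mul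
    (hG : ∀ t ∈ Ici (0 : ℝ), HasDerivWithinAt G ((1 - G t) * f (G t)) (Ici 0) t)
    {ℓ : ℝ} (hℓ : ℓ < G 0) (h1 : G 0 ≤ 1) (hf : ∀ x ∈ Ioo ℓ 1, 0 < f x)
    {t : ℝ} (ht : 0 ≤ t) : G 0 ≤ G t := by
  have barrier : ∀ ε ∈ Ioo 0 (G 0 - ℓ), G 0 - ε ≤ G t := by
    intro ε hε
    have key := image_le_of_deriv_right_lt_deriv_boundary (f := fun s => -G s)
      (B := fun _ => ε - G 0) (B' := fun _ => 0)
      (fun s hs => ((hG s hs.1).continuousWithinAt.mono Icc_subset_Ici_self).neg)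
      (fun s hs => ((hG s hs.1).mono (Ici_subset_Ici.2 hs.1)).neg) (by linarith [hε.1])
      (fun _ => hasDerivAt_const _ _) (fun s _ hs => ?_) ⟨ht, le_rfl⟩
    · linarith
    · have hGs : G s = G 0 - ε := by linarith
      have hlevel : G s ∈ Ioo ℓ 1 := by
        rw [hGs]
        constructor <;> linarith [hε.1, hε.2]
      have : 0 < (1 - G s) * f (G s) := mul_pos (by linarith [hlevel.2]) (hf _ hlevel)
      linarith
  have hlim : Tendsto (fun ε => G 0 - ε) (𝓝[>] 0) (𝓝 (G 0)) := by
    simpa using ((tendsto_id (x := 𝓝 (0 : ℝ))).const_sub (G 0)).mono_left nhdsWithin_le_nhds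
  exact le_of_tendsto hlim (eventually_of_mem (Ioo_mem_nhdsGT (sub_pos.2 hℓ)) barrier)

theorem monotoneOn_of_hasDerivWithinAt_one_sub_mul
    (hG : ∀ t ∈ Ici (0 : ℝ), HasDerivWithinAt G ((1 - G t) * f (G t)) (Ici 0) t)
    {ℓ : ℝ} (hf : ∀ x ∈ Ioo ℓ 1, 0 < f x) (hmem : ∀ t ∈ Ici (0 : ℝ), G t ∈ Ioc ℓ 1) :
    MonotoneOn G (Ici 0) := by
  refine monotoneOn_of_hasDerivWithinAt_nonneg (f' := fun t => (1 - G t) * f (G t)) (convex_Ici 0)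
    (fun t ht => (hG t ht).continuousWithinAt) (fun t ht => ?_) (fun t ht => ?_)
  · rw [interior_Ici] at ht ⊢
    exact (hG t (Ioi_subset_Ici_self ht)).mono Ioi_subset_Ici_self
  · rw [interior_Ici] at ht
    obtain ⟨hℓ, h1⟩ := hmem t (Ioi_subset_Ici_self ht)
    rcases h1.lt_or_eq with hlt | heq
    · exact (mul_pos (sub_pos.2 hlt) (hf _ ⟨hℓ, hlt⟩)).le
    · simp [heq]

theorem one_sub_le_mul_exp_of_hasDerivWithinAt_one_sub_mul
    (hG : ∀ t ∈ Ici (0 : ℝ), HasDerivWithinAt G ((1 - G t) * f (G t)) (Ici 0) t)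
    {ℓ c : ℝ} (hf : ∀ x ∈ Ioc ℓ 1, c ≤ f x) (hmem : ∀ t ∈ Ici (0 : ℝ), G t ∈ Ioc ℓ 1)
    {t : ℝ} (ht : 0 ≤ t) : 1 - G t ≤ (1 - G 0) * Real.exp (-(c * t)) := by
  have key := le_gronwallBound_of_liminf_deriv_right_le (f := fun s => 1 - G s)
    (f' := fun s => -((1 - G s) * f (G s))) (δ := 1 - G 0) (K := -c) (ε := 0)
    (fun s hs => ((hG s hs.1).continuousWithinAt.mono Icc_subset_Ici_self).const_sub 1)
    (fun s hs _ hr =>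
      (((hG s hs.1).mono (Ici_subset_Ici.2 hs.1)).const_sub 1).liminf_right_slope_le hr)
    le_rfl (fun s hs => ?_) t ⟨ht, le_rfl⟩
  · rwa [gronwallBound_ε0, sub_zero, neg_mul] at key
  · obtain ⟨hℓ, h1⟩ := hmem s hs.1
    have := mul_le_mul_of_nonneg_left (hf _ ⟨hℓ, h1⟩) (sub_nonneg.2 h1)
    linarith

theorem tendsto_one_of_hasDerivWithinAt_one_sub_mul
    (hG : ∀ t ∈ Ici (0 : ℝ), HasDerivWithinAt G ((1 - G t) * f (G t)) (Ici 0) t)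
    {ℓ c : ℝ} (hc : 0 < c) (hf : ∀ x ∈ Ioc ℓ 1, c ≤ f x)
    (hmem : ∀ t ∈ Ici (0 : ℝ), G t ∈ Ioc ℓ 1) : Tendsto G atTop (𝓝 1) := by
  have hexp : Tendsto (fun t => 1 - (1 - G 0) * Real.exp (-(c * t))) atTop (𝓝 1) := by
    simpa using ((Real.tendsto_exp_neg_atTop_nhds_zero.comp
      (tendsto_id.const_mul_atTop hc)).const_mul (1 - G 0)).const_sub 1
  refine tendsto_of_tendsto_of_tendsto_of_le_of_le' hexp tendsto_const_nhds ?_ ?_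
  · filter_upwards [eventually_ge_atTop 0] with t ht
    linarith [one_sub_le_mul_exp_of_hasDerivWithinAt_one_sub_mul hG hf hmem ht]
  · filter_upwards [eventually_ge_atTop 0] with t ht
    exact (hmem t ht).2

end OneSubMul

theorem all_grass_locally_stable_general
    (φ : ℝ → ℝ) (K : NNReal) (hφ : LipschitzWith K φ)
    (J : ℝ) (hJ : J < φ 1) :
    ∃ δ ∈ Ioo (0:ℝ) 1, ∀ G : ℝ → ℝ,
      (∀ t ∈ Ici (0:ℝ), HasDerivWithinAt G
        ((1 - G t) * φ (G t) - J * G t * (1 - G t)) (Ici 0) t) →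
      G 0 ∈ Ioc (1 - δ) 1 →
      MonotoneOn G (Ici 0) ∧ (∀ t ∈ Ici (0:ℝ), G t ∈ Ioc (1 - δ) 1) ∧
        Tendsto G atTop (nhds 1) := by
  set f : ℝ → ℝ := fun x => φ x - J * x with hf_def
  have hf : Continuous f := hφ.continuous.sub (continuous_const.mul continuous_id)
  have hf1 : 0 < f 1 / 2 := by simp only [hf_def]; linarith
  obtain ⟨δ, hδ, hfδ⟩ := exists_Icc_half_le_of_continuousAt hf.continuousAt (by linarith)
  have hpos : ∀ x ∈ Ioo (1 - δ) 1, 0 < f x := fun x hx =>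
    hf1.trans_le (hfδ x (Ioo_subset_Icc_self hx))
  refine ⟨δ, hδ, fun G hG hG0 => ?_⟩
  have hG' : ∀ t ∈ Ici (0 : ℝ), HasDerivWithinAt G ((1 - G t) * f (G t)) (Ici 0) t :=
    fun t ht => (hG t ht).congr_deriv (by simp only [hf_def]; ring)
  have hmem : ∀ t ∈ Ici (0 : ℝ), G t ∈ Ioc (1 - δ) 1 := fun t ht =>
    ⟨hG0.1.trans_le (apply_zero_le_apply_of_hasDerivWithinAt_one_sub_mul hG' hG0.1 hG0.2 hpos ht),
      le_one_of_hasDerivWithinAt_one_sub_mul hf hG' hG0.2 ht⟩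
  exact ⟨monotoneOn_of_hasDerivWithinAt_one_sub_mul hG' hpos hmem, hmem,
    tendsto_one_of_hasDerivWithinAt_one_sub_mul hG' hf1
      (fun x hx => hfδ x (Ioc_subset_Icc_self hx)) hmem⟩

/-- If the forest birth rate `J̄` is below the forest mortality `φ(1)` at
full grass cover, then the all-grass equilibrium `G = 1` of the grass-forest generalized
Kolmogorov equation `G' = (1−G)φ(G) − J̄ G(1−G)` is locally asymptotically stable: there is
`δ ∈ (0,1)` such that any solution starting in `(1−δ, 1]` is nondecreasing, remains in
`(1−δ, 1]`, and converges to `1`. -/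
theorem all_grass_locally_stable
    (φ : ℝ → ℝ) (K : NNReal) (hφ : LipschitzWith K φ)
    (J : ℝ) (hJ0 : 0 ≤ J) (hJ : J < φ 1) :
    ∃ δ ∈ Ioo (0:ℝ) 1, ∀ G : ℝ → ℝ,
      (∀ t ∈ Ici (0:ℝ), HasDerivWithinAt G
        ((1 - G t) * φ (G t) - J * G t * (1 - G t)) (Ici 0) t) →
      G 0 ∈ Ioc (1 - δ) 1 →
      MonotoneOn G (Ici 0) ∧ (∀ t ∈ Ici (0:ℝ), G t ∈ Ioc (1 - δ) 1) ∧
        Tendsto G atTop (nhds 1) :=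
  all_grass_locally_stable_general φ K hφ J hJ
end

section
/- Let φ : ℝ → ℝ be Lipschitz continuous and J̄ > φ(1). Then there exists δ ∈ (0,1) such that (1−G)φ(G) − J̄ G(1−G) < 0 for all G ∈ (1−δ, 1); consequently, every solution G of the two-state grass–forest generalized Kolmogorov equation G' = (1−G)φ(G) − J̄ G(1−G) with G(0) ∈ (1−δ,1) is strictly decreasing as long as it remains in (1−δ,1). In particular, the all-grass equilibrium G = 1 is unstable when J̄ > φ(1). -/
open Set Filter Topology

/-!
Near `G = 1` the vector field factors as `(1 - G) (φ G - J̄ G)`. The second factor is continuous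
and equals `φ 1 - J̄ < 0` at `G = 1`, so it stays negative on a left neighbourhood `(1 - δ, 1)`,
where the first factor is positive. A solution staying in that interval therefore has negative
derivative and is strictly decreasing.
-/

theorem exists_mem_Ioo_forall_Ioo_of_eventually_nhdsLT {p : ℝ → Prop} {a r : ℝ} (hr : 0 < r)
    (h : ∀ᶠ x in 𝓝[<] a, p x) : ∃ δ ∈ Ioo 0 r, ∀ x ∈ Ioo (a - δ) a, p x := by
  obtain ⟨l, hla, hl⟩ := mem_nhdsLT_iff_exists_Ioo_subset.mp h
  have hla : 0 < a - l := sub_pos.mpr hla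
  refine ⟨min (a - l) (r / 2), ⟨lt_min hla (half_pos hr), min_lt_of_right_lt (half_lt_self hr)⟩,
    fun x hx ↦ hl ⟨?_, hx.2⟩⟩
  linarith [hx.1, min_le_left (a - l) (r / 2)]

theorem strictAntiOn_Icc_of_hasDerivWithinAt_Ici_neg {f f' : ℝ → ℝ} {a t₁ t₂ : ℝ} (ht₁ : a ≤ t₁)
    (hf : ∀ t ∈ Icc t₁ t₂, HasDerivWithinAt f (f' t) (Ici a) t)
    (hf' : ∀ t ∈ Ioo t₁ t₂, f' t < 0) : StrictAntiOn f (Icc t₁ t₂) := by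
  have hsub : Icc t₁ t₂ ⊆ Ici a := fun t ht ↦ ht₁.trans ht.1
  refine strictAntiOn_of_hasDerivWithinAt_neg (convex_Icc t₁ t₂)
    (fun t ht ↦ (hf t ht).continuousWithinAt.mono hsub) (fun t ht ↦ ?_) (by simpa using hf')
  rw [interior_Icc] at ht ⊢
  exact (hf t (Ioo_subset_Icc_self ht)).mono (Ioo_subset_Icc_self.trans hsub)

/-- If the forest birth rate exceeds forest mortality at full grass cover
(`J̄ > φ(1)`), then there is `δ ∈ (0,1)` so that the vector field
`(1−G)φ(G) − J̄ G(1−G)` is negative on `(1−δ, 1)`; consequently any solution of the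
grass-forest generalized Kolmogorov equation starting in `(1−δ, 1)` is strictly decreasing
as long as it remains in `(1−δ, 1)` — the all-grass equilibrium is unstable. -/
theorem all_grass_unstable
    (φ : ℝ → ℝ) (K : NNReal) (hφ : LipschitzWith K φ)
    (J : ℝ) (hJ : φ 1 < J) :
    ∃ δ ∈ Ioo (0:ℝ) 1,
      (∀ g ∈ Ioo (1 - δ) 1, (1 - g) * φ g - J * g * (1 - g) < 0) ∧
      ∀ G : ℝ → ℝ,
        (∀ t ∈ Ici (0:ℝ), HasDerivWithinAt G
          ((1 - G t) * φ (G t) - J * G t * (1 - G t)) (Ici 0) t) →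
        G 0 ∈ Ioo (1 - δ) 1 →
        ∀ t₁ t₂ : ℝ, 0 ≤ t₁ → t₁ < t₂ →
          (∀ u ∈ Icc t₁ t₂, G u ∈ Ioo (1 - δ) 1) → G t₂ < G t₁ := by
  have hcont : Continuous fun g ↦ φ g - J * g :=
    hφ.continuous.sub (continuous_const.mul continuous_id)
  have hnear : ∀ᶠ g in 𝓝[<] 1, φ g - J * g < 0 :=
    (hcont.continuousAt.eventually_lt continuousAt_const (by linarith)).filter_mono
      nhdsWithin_le_nhds
  obtain ⟨δ, hδ, hδneg⟩ := exists_mem_Ioo_forall_Ioo_of_eventually_nhdsLT one_pos hnear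
  have hfield : ∀ g ∈ Ioo (1 - δ) 1, (1 - g) * φ g - J * g * (1 - g) < 0 := fun g hg ↦ by
    have hfactor : (1 - g) * φ g - J * g * (1 - g) = (1 - g) * (φ g - J * g) := by ring
    exact hfactor ▸ mul_neg_of_pos_of_neg (sub_pos.mpr hg.2) (hδneg g hg)
  refine ⟨δ, hδ, hfield, fun G hG _ t₁ t₂ ht₁ ht₁₂ hIn ↦ ?_⟩
  have hanti := strictAntiOn_Icc_of_hasDerivWithinAt_Ici_neg ht₁
    (fun t ht ↦ hG t (ht₁.trans ht.1)) (fun t ht ↦ hfield _ (hIn t (Ioo_subset_Icc_self ht)))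
  exact hanti (left_mem_Icc.mpr ht₁₂.le) (right_mem_Icc.mpr ht₁₂.le) ht₁₂
end

section
/- Let φ : [0,1] → ℝ be continuous with φ(0) > 0, and let J̄ > φ(1). Then there exists G* ∈ (0,1) with φ(G*) = J̄ G*; consequently the constant function G(t) ≡ G* is an equilibrium of the two-state grass–forest generalized Kolmogorov equation G' = (1−G)φ(G) − J̄ G(1−G) distinct from the all-grass state (the grass-dominated equilibrium emerging at the transcritical bifurcation). -/
open Set

theorem exists_mem_Ioo_apply_eq_mul {φ : ℝ → ℝ} {a b J : ℝ} (hab : a ≤ b)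
    (hφc : ContinuousOn φ (Icc a b)) (ha : J * a < φ a) (hb : φ b < J * b) :
    ∃ G ∈ Ioo a b, φ G = J * G := by
  have hc : ContinuousOn (fun x => φ x - J * x) (Icc a b) := by fun_prop
  obtain ⟨G, hG, hG0⟩ := intermediate_value_Ioo' hab hc
    (show (0 : ℝ) ∈ Ioo (φ b - J * b) (φ a - J * a) by constructor <;> linarith)
  exact ⟨G, hG, sub_eq_zero.mp hG0⟩

/-- If `φ` is continuous on `[0,1]` with `φ(0) > 0` and `J̄ > φ(1)`, then
there is `G* ∈ (0,1)` with `φ(G*) = J̄ G*`; the constant function `G ≡ G*` is then an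
equilibrium of the grass-forest generalized Kolmogorov equation distinct from the all-grass
state (the grass-dominated equilibrium emerging at the transcritical bifurcation). -/
theorem grass_dominated_equilibrium_exists
    (φ : ℝ → ℝ) (hφc : ContinuousOn φ (Icc (0:ℝ) 1))
    (hφ0 : 0 < φ 0) (J : ℝ) (hJ : φ 1 < J) :
    ∃ Gstar ∈ Ioo (0:ℝ) 1, φ Gstar = J * Gstar ∧
      ∀ t : ℝ, HasDerivAt (fun _ : ℝ => Gstar)
        ((1 - Gstar) * φ Gstar - J * Gstar * (1 - Gstar)) t := by
  obtain ⟨G, hG, hφG⟩ := exists_mem_Ioo_apply_eq_mul zero_le_one hφc (by simpa using hφ0)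
    (by simpa using hJ)
  refine ⟨G, hG, hφG, fun t => ?_⟩
  have hrhs : (1 - G) * φ G - J * G * (1 - G) = 0 := by rw [hφG]; ring
  simpa only [hrhs] using hasDerivAt_const t G
end

section
/- Let φ : ℝ → ℝ be Lipschitz continuous with φ ≥ 0, let J̄ ≥ 0, and suppose φ(G) > J̄ G for all G ∈ [0,1). Then every solution G : [0,∞) → ℝ of the two-state grass–forest generalized Kolmogorov equation G' = (1−G)φ(G) − J̄ G(1−G) with G(0) ∈ [0,1] is nondecreasing and satisfies G(t) → 1 as t → ∞; i.e., for forest birth rate small enough the all-grass state is the globally attracting equilibrium on [0,1]. -/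
open Set Filter

/-!
Writing `f g = (1 - g) (φ g - J̄ g)` for the right-hand side, `f ≥ 0` on `(-∞, 1]` and `f > 0`
on `[0, 1)`. The deviation `1 - G` solves the linear equation `u' = (J̄ G - φ G) u`, so by
Grönwall it cannot change sign: `G ≤ 1` forever. Hence `G' = f G ≥ 0` and `G` increases,
staying in `[G 0, 1]`. If `G` stayed below some `L < 1`, then `G' ≥ min_{[0, L]} f > 0` would
make `G` grow linearly, which is absurd; so `G → 1`.
-/

section ODE

variable {u u' : ℝ → ℝ} {a : ℝ}

theorem add_mul_sub_le_of_le_hasDerivWithinAt {c : ℝ}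
    (hu : ∀ t ∈ Ici a, HasDerivWithinAt u (u' t) (Ici a) t) (hc : ∀ t ∈ Ici a, c ≤ u' t)
    {s t : ℝ} (hs : s ∈ Ici a) (hst : s ≤ t) : u s + c * (t - s) ≤ u t := by
  have has : Ici s ⊆ Ici a := Ici_subset_Ici.2 hs
  have hu_right : ∀ r ∈ Ici s, HasDerivWithinAt u (u' r) (Ici r) r := fun r hr =>
    (hu r (has hr)).mono (Ici_subset_Ici.2 (hs.trans hr))
  have hbound := image_le_of_deriv_right_le_deriv_boundary (f := fun r => u s + c * (r - s))
    (f' := fun _ => c) (b := t) (B := u)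
    (by fun_prop) (fun r _ => ((hasDerivAt_id r).sub_const s).const_mul c
      |>.const_add (u s) |>.hasDerivWithinAt |>.congr_deriv (mul_one c))
    (by simp)
    (fun r hr => (hu r (has hr.1)).continuousWithinAt.mono (Icc_subset_Ici_self.trans has))
    (fun r hr => hu_right r hr.1) (fun r hr => hc r (has hr.1))
  exact hbound ⟨hst, le_rfl⟩

theorem monotoneOn_Ici_of_hasDerivWithinAt_nonneg
    (hu : ∀ t ∈ Ici a, HasDerivWithinAt u (u' t) (Ici a) t) (hu' : ∀ t ∈ Ici a, 0 ≤ u' t) :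
    MonotoneOn u (Ici a) := fun s hs t _ hst => by
  simpa using add_mul_sub_le_of_le_hasDerivWithinAt hu hu' hs hst

/-- By Grönwall's inequality `u` vanishes identically after any zero. -/
theorem nonneg_of_hasDerivWithinAt_mul_self {c : ℝ → ℝ} (hc : ContinuousOn c (Ici a))
    (hu : ∀ t ∈ Ici a, HasDerivWithinAt u (c t * u t) (Ici a) t) (ha : 0 ≤ u a)
    {b : ℝ} (hb : b ∈ Ici a) : 0 ≤ u b := by
  by_contra! hneg
  have hu_cont : ContinuousOn u (Icc a b) := fun t ht =>
    (hu t ht.1).continuousWithinAt.mono Icc_subset_Ici_self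
  obtain ⟨z, hz, huz⟩ := intermediate_value_Icc' hb hu_cont ⟨hneg.le, ha⟩
  have hza : Ici z ⊆ Ici a := Ici_subset_Ici.2 hz.1
  obtain ⟨C, hC⟩ := isCompact_Icc.exists_bound_of_continuousOn
    (hc.mono (Icc_subset_Ici_self.trans hza) : ContinuousOn c (Icc z b))
  have hzero := eq_zero_of_abs_deriv_le_mul_abs_self_of_eq_zero_right
    (hu_cont.mono (Icc_subset_Icc_left hz.1))
    (fun t ht => (hu t (hza ht.1)).mono (Ici_subset_Ici.2 (hz.1.trans ht.1))) huz
    (fun t ht => by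
      rw [norm_mul]
      exact mul_le_mul_of_nonneg_right (hC t (Ico_subset_Icc_self ht)) (norm_nonneg _))
    b ⟨hz.2, le_rfl⟩
  exact hneg.ne hzero

/-- Otherwise `u' ≥ min_{[p, L]} f > 0` forever and `u` grows linearly. -/
theorem exists_lt_of_hasDerivWithinAt_comp_of_pos {f : ℝ → ℝ} {p L : ℝ}
    (hf : ContinuousOn f (Icc p L)) (hpos : ∀ g ∈ Icc p L, 0 < f g)
    (hu : ∀ t ∈ Ici a, HasDerivWithinAt u (f (u t)) (Ici a) t) (hp : ∀ t ∈ Ici a, p ≤ u t) :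
    ∃ t ∈ Ici a, L < u t := by
  by_contra! hle
  have hmem : ∀ t ∈ Ici a, u t ∈ Icc p L := fun t ht => ⟨hp t ht, hle t ht⟩
  obtain ⟨g₀, hg₀, hmin⟩ := isCompact_Icc.exists_isMinOn ⟨u a, hmem a self_mem_Ici⟩ hf
  have hc : 0 < f g₀ := hpos g₀ hg₀
  set T := a + (L - p) / f g₀ + 1
  have hT : a ≤ T := by
    have : 0 ≤ (L - p) / f g₀ := div_nonneg (sub_nonneg.2 (hg₀.1.trans hg₀.2)) hc.le
    linarith
  have hgrow := add_mul_sub_le_of_le_hasDerivWithinAt hu (fun t ht => hmin (hmem t ht))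
    self_mem_Ici hT
  have hslope : f g₀ * (T - a) = L - p + f g₀ := by
    simp only [T]; field_simp; ring
  linarith [hp a self_mem_Ici, hle T hT]

end ODE

section GrassForest

variable {φ : ℝ → ℝ} {J : ℝ}

def grassForestField (φ : ℝ → ℝ) (J g : ℝ) : ℝ := (1 - g) * φ g - J * g * (1 - g)

theorem grassForestField_eq_mul (g : ℝ) :
    grassForestField φ J g = (1 - g) * (φ g - J * g) := by
  unfold grassForestField; ring

theorem continuous_grassForestField (hφ : Continuous φ) : Continuous (grassForestField φ J) := by
  unfold grassForestField; fun_prop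

theorem grassForestField_pos (hdom : ∀ g ∈ Ico (0:ℝ) 1, J * g < φ g) {g : ℝ}
    (hg : g ∈ Ico (0:ℝ) 1) : 0 < grassForestField φ J g := by
  rw [grassForestField_eq_mul]
  exact mul_pos (by linarith [hg.2]) (by linarith [hdom g hg])

theorem grassForestField_nonneg (hφnn : ∀ x : ℝ, 0 ≤ φ x) (hJ : 0 ≤ J)
    (hdom : ∀ g ∈ Ico (0:ℝ) 1, J * g < φ g) {g : ℝ} (hg : g ≤ 1) :
    0 ≤ grassForestField φ J g := by
  rcases lt_or_ge g 0 with hneg | hnn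
  · rw [grassForestField_eq_mul]
    exact mul_nonneg (by linarith) (by nlinarith [hφnn g])
  rcases hg.lt_or_eq with hlt | rfl
  · exact (grassForestField_pos hdom ⟨hnn, hlt⟩).le
  · simp [grassForestField]

end GrassForest

/-- If `φ` is Lipschitz, nonnegative, `J̄ ≥ 0`, and `φ(G) > J̄ G` on
`[0,1)`, then every solution of the grass-forest generalized Kolmogorov equation
`G' = (1−G)φ(G) − J̄ G(1−G)` starting in `[0,1]` is nondecreasing and converges to the
all-grass state `G = 1`, which is thus globally attracting on `[0,1]`. -/
theorem all_grass_globally_attracting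
    (φ : ℝ → ℝ) (K : NNReal) (hφ : LipschitzWith K φ) (hφnn : ∀ x : ℝ, 0 ≤ φ x)
    (J : ℝ) (hJ : 0 ≤ J)
    (hdom : ∀ g ∈ Ico (0:ℝ) 1, J * g < φ g)
    (G : ℝ → ℝ)
    (hG : ∀ t ∈ Ici (0:ℝ), HasDerivWithinAt G
      ((1 - G t) * φ (G t) - J * G t * (1 - G t)) (Ici 0) t)
    (h0 : G 0 ∈ Icc (0:ℝ) 1) :
    MonotoneOn G (Ici 0) ∧ Tendsto G atTop (nhds 1) := by
  have hφc : Continuous φ := hφ.continuous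
  have hf : Continuous (grassForestField φ J) := continuous_grassForestField hφc
  have hG' : ∀ t ∈ Ici (0:ℝ), HasDerivWithinAt G (grassForestField φ J (G t)) (Ici 0) t := hG
  have hGc : ContinuousOn G (Ici 0) := fun t ht => (hG t ht).continuousWithinAt
  have hle : ∀ t ∈ Ici (0:ℝ), G t ≤ 1 := fun t ht => sub_nonneg.1 <|
    nonneg_of_hasDerivWithinAt_mul_self (c := fun s => J * G s - φ (G s))
      (by fun_prop) (fun s hs => ((hG s hs).const_sub 1).congr_deriv (by ring))
      (sub_nonneg.2 h0.2) ht
  have hmono : MonotoneOn G (Ici 0) := monotoneOn_Ici_of_hasDerivWithinAt_nonneg hG'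
    fun t ht => grassForestField_nonneg hφnn hJ hdom (hle t ht)
  refine ⟨hmono, tendsto_order.2 ⟨fun x hx => ?_, fun x hx => ?_⟩⟩
  · obtain ⟨t₀, ht₀, hlt⟩ := exists_lt_of_hasDerivWithinAt_comp_of_pos (L := max x 0)
      hf.continuousOn
      (fun g hg => grassForestField_pos hdom ⟨hg.1, hg.2.trans_lt (max_lt hx one_pos)⟩)
      hG' (fun t ht => h0.1.trans (hmono self_mem_Ici ht ht))
    filter_upwards [eventually_ge_atTop t₀] with t ht
    exact (le_max_left x 0).trans_lt (hlt.trans_le (hmono ht₀ (ht₀.trans ht) ht))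
  · filter_upwards [eventually_ge_atTop 0] with t ht using (hle t ht).trans_lt hx
end

section
/- Let Γ be a measurable space with probability measure q, let J, W : Γ × Γ → ℝ be bounded measurable kernels, and let φ : ℝ → ℝ be bounded and Lipschitz continuous. Suppose P, Q : [0,T] × Γ → [0,1] are jointly measurable, continuous in t for each r, differentiable in t, and both satisfy the forest-grass integro-differential equation ∂_t P_F(t,r) = (1 − P_F(t,r)) ∫_Γ J(r',r) P_F(t,r') dq(r') − P_F(t,r) φ(∫_Γ W(r',r) (1 − P_F(t,r')) dq(r')), with P(0,·) = Q(0,·) for q-almost every r. Then for every t ∈ [0,T], P(t,·) = Q(t,·) for q-almost every r. -/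
/-!
The difference `u = P - Q` of two solutions satisfies
`|∂ₜ u(t, r)| ≤ A |u(t, r)| + B ‖u(t)‖_{L¹(q)}`: the right-hand side of the equation is Lipschitz in
the local value and, through the bounded kernels and the Lipschitz mortality `φ`, in the `L¹(q)`
norm of the profile. Integrating in time and then over `Γ` (Fubini) turns this into the integral
inequality `D t ≤ K ∫₀ᵗ D` for `D t = ‖u(t)‖_{L¹(q)}`, and Grönwall's inequality for the primitive
of `D` forces `D = 0`.
-/

open Set MeasureTheory Filter

theorem abs_sub_le_intervalIntegral_of_abs_deriv_le {f f' g : ℝ → ℝ} {a b : ℝ} (hab : a ≤ b)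
    (hf : ContinuousOn f (Icc a b)) (hf' : ∀ x ∈ Ioo a b, HasDerivWithinAt f (f' x) (Ioi x) x)
    (hg : IntegrableOn g (Icc a b)) (hbound : ∀ x ∈ Ioo a b, |f' x| ≤ g x) :
    |f b - f a| ≤ ∫ x in a..b, g x := by
  rw [abs_sub_le_iff]
  constructor
  · exact intervalIntegral.sub_le_integral_of_hasDeriv_right_of_le hab hf hf' hg
      fun x hx => (le_abs_self _).trans (hbound x hx)
  · have h := intervalIntegral.sub_le_integral_of_hasDeriv_right_of_le hab hf.neg
      (fun x hx => (hf' x hx).neg) hg fun x hx => (neg_le_abs _).trans (hbound x hx)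
    simp only [Pi.neg_apply] at h
    linarith

theorem eq_zero_of_le_mul_intervalIntegral {D : ℝ → ℝ} {K a b : ℝ}
    (hD : ContinuousOn D (Icc a b)) (hD_nonneg : ∀ t ∈ Icc a b, 0 ≤ D t)
    (hle : ∀ t ∈ Icc a b, D t ≤ K * ∫ s in a..t, D s) :
    ∀ t ∈ Icc a b, D t = 0 := by
  intro t ht
  have hab : a ≤ b := ht.1.trans ht.2
  have hG_nonneg : ∀ x ∈ Icc a b, 0 ≤ ∫ s in a..x, D s := fun x hx =>
    intervalIntegral.integral_nonneg hx.1 fun s hs => hD_nonneg s ⟨hs.1, hs.2.trans hx.2⟩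
  have hG_cont : ContinuousOn (fun x => ∫ s in a..x, D s) (Icc a b) := by
    simpa [uIcc_of_le hab] using
      intervalIntegral.continuousOn_primitive_interval (a := a) (b := b)
        (by simpa [uIcc_of_le hab] using hD.integrableOn_Icc)
  have hG_deriv : ∀ x ∈ Ico a b,
      HasDerivWithinAt (fun x => ∫ s in a..x, D s) (D x) (Ici x) x := fun x hx =>
    intervalIntegral.integral_hasDerivWithinAt_right
      ((hD.mono (Icc_subset_Icc le_rfl hx.2.le)).intervalIntegrable_of_Icc hx.1)
      ((hD.stronglyMeasurableAtFilter_nhdsWithin measurableSet_Icc x).filter_mono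
        (nhdsWithin_le_of_mem (Icc_mem_nhdsGT_of_mem hx)))
      ((hD x (Ico_subset_Icc_self hx)).mono_of_mem_nhdsWithin (Icc_mem_nhdsGT_of_mem hx))
  have hG_zero := eq_zero_of_abs_deriv_le_mul_abs_self_of_eq_zero_right hG_cont hG_deriv
    intervalIntegral.integral_same fun x hx => by
      rw [Real.norm_eq_abs, Real.norm_eq_abs, abs_of_nonneg (hD_nonneg x (Ico_subset_Icc_self hx)),
        abs_of_nonneg (hG_nonneg x (Ico_subset_Icc_self hx))]
      exact hle x (Ico_subset_Icc_self hx)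
  refine le_antisymm ?_ (hD_nonneg t ht)
  simpa [hG_zero t ht] using hle t ht

theorem integrable_prod_restrict_Ioc_of_abs_le {Γ : Type*} [MeasurableSpace Γ] {q : Measure Γ}
    [IsFiniteMeasure q] {F : ℝ → Γ → ℝ} {a b C : ℝ}
    (hF : Measurable fun p : ℝ × Γ => F p.1 p.2) (hFC : ∀ s ∈ Icc a b, ∀ r, |F s r| ≤ C) :
    Integrable (Function.uncurry fun r s => F s r) (q.prod (volume.restrict (Ioc a b))) := by
  have hF' : Measurable (Function.uncurry fun r s => F s r) := hF.comp measurable_swap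
  refine Integrable.of_bound hF'.aestronglyMeasurable C ?_
  rw [Measure.ae_prod_iff_ae_ae (measurableSet_le hF'.norm measurable_const)]
  exact Eventually.of_forall fun r =>
    ae_restrict_of_forall_mem measurableSet_Ioc fun s hs => hFC s (Ioc_subset_Icc_self hs) r

theorem integral_abs_le_mul_intervalIntegral_of_forall_abs_le {Γ : Type*} [MeasurableSpace Γ]
    {q : Measure Γ} [IsFiniteMeasure q] {u : ℝ → Γ → ℝ} {t M A B : ℝ} (ht : 0 ≤ t)
    (hu : Measurable fun p : ℝ × Γ => u p.1 p.2) (hM : ∀ s ∈ Icc 0 t, ∀ r, |u s r| ≤ M)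
    (h0 : ∀ᵐ r ∂q, u 0 r = 0)
    (hpt : ∀ r, |u t r| ≤ |u 0 r| + ∫ s in 0..t, (A * |u s r| + B * ∫ r', |u s r'| ∂q)) :
    ∫ r, |u t r| ∂q ≤ (A + B * q.real univ) * ∫ s in 0..t, ∫ r, |u s r| ∂q := by
  set F : ℝ → Γ → ℝ := fun s r => A * |u s r| + B * ∫ r', |u s r'| ∂q with hF
  have hu_abs_bdd : ∀ s ∈ Icc 0 t, ∀ᵐ r ∂q, ‖|u s r|‖ ≤ M := fun s hs =>
    Eventually.of_forall fun r => by simpa using hM s hs r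
  have hu_int : ∀ s ∈ Icc 0 t, Integrable (fun r => |u s r|) q := fun s hs =>
    .of_bound (hu.comp measurable_prodMk_left).abs.aestronglyMeasurable M (hu_abs_bdd s hs)
  have hF_meas : Measurable fun p : ℝ × Γ => F p.1 p.2 :=
    (measurable_const.mul hu.abs).add (measurable_const.mul
      ((hu.abs.stronglyMeasurable.integral_prod_right' (ν := q)).measurable.comp measurable_fst))
  have hF_bdd : ∀ s ∈ Icc 0 t, ∀ r, |F s r| ≤ |A| * M + |B| * (M * q.real univ) := by
    intro s hs r
    refine (abs_add_le _ _).trans ?_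
    rw [abs_mul, abs_mul, abs_abs]
    gcongr
    exacts [hM s hs r, norm_integral_le_of_norm_le_const (hu_abs_bdd s hs)]
  have hF_int := integrable_prod_restrict_Ioc_of_abs_le (q := q) hF_meas hF_bdd
  have hF_int' : Integrable (fun r => ∫ s in 0..t, F s r) q := by
    simp only [intervalIntegral.integral_of_le ht]
    exact hF_int.integral_prod_left
  have h0t : (0:ℝ) ∈ Icc 0 t := ⟨le_rfl, ht⟩
  have hu0 : ∫ r, |u 0 r| ∂q = 0 := integral_eq_zero_of_ae (h0.mono fun r hr => by simp [hr])
  calc ∫ r, |u t r| ∂q ≤ ∫ r, (|u 0 r| + ∫ s in 0..t, F s r) ∂q :=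
        integral_mono (hu_int t ⟨ht, le_rfl⟩) ((hu_int 0 h0t).add hF_int') hpt
    _ = ∫ r, (∫ s in 0..t, F s r) ∂q := by
        rw [integral_add (hu_int 0 h0t) hF_int', hu0, zero_add]
    _ = ∫ s in 0..t, ∫ r, F s r ∂q := by
        simp only [intervalIntegral.integral_of_le ht]
        exact integral_integral_swap hF_int
    _ = ∫ s in 0..t, (A + B * q.real univ) * ∫ r, |u s r| ∂q := by
        refine intervalIntegral.integral_congr fun s hs => ?_
        rw [uIcc_of_le ht] at hs
        simp only [hF]
        rw [integral_add ((hu_int s hs).const_mul A) (integrable_const _), integral_const_mul,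
          integral_const, smul_eq_mul]
        ring
    _ = (A + B * q.real univ) * ∫ s in 0..t, ∫ r, |u s r| ∂q :=
        intervalIntegral.integral_const_mul _ _

theorem ae_eq_zero_of_abs_deriv_le {Γ : Type*} [MeasurableSpace Γ] {q : Measure Γ}
    [IsFiniteMeasure q] {u u' : ℝ → Γ → ℝ} {T M A B : ℝ}
    (hu : Measurable fun p : ℝ × Γ => u p.1 p.2) (hM : ∀ t ∈ Icc 0 T, ∀ r, |u t r| ≤ M)
    (hu' : ∀ r, ∀ t ∈ Icc 0 T, HasDerivWithinAt (u · r) (u' t r) (Icc 0 T) t)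
    (hbound : ∀ r, ∀ t ∈ Icc 0 T, |u' t r| ≤ A * |u t r| + B * ∫ r', |u t r'| ∂q)
    (h0 : ∀ᵐ r ∂q, u 0 r = 0) :
    ∀ t ∈ Icc 0 T, ∀ᵐ r ∂q, u t r = 0 := by
  have hu_abs_bdd : ∀ t ∈ Icc 0 T, ∀ᵐ r ∂q, ‖|u t r|‖ ≤ M := fun t ht =>
    Eventually.of_forall fun r => by simpa using hM t ht r
  have hu_meas : ∀ t, Measurable fun r => |u t r| := fun t =>
    (hu.comp measurable_prodMk_left).abs
  have hu_cont : ∀ r, ContinuousOn (u · r) (Icc 0 T) := fun r t ht =>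
    (hu' r t ht).continuousWithinAt
  have hD_cont : ContinuousOn (fun t => ∫ r, |u t r| ∂q) (Icc 0 T) :=
    continuousOn_of_dominated (fun t _ => (hu_meas t).aestronglyMeasurable) hu_abs_bdd
      (integrable_const M) (Eventually.of_forall fun r => (hu_cont r).abs)
  have hD_le : ∀ t ∈ Icc 0 T,
      ∫ r, |u t r| ∂q ≤ (A + B * q.real univ) * ∫ s in 0..t, ∫ r, |u s r| ∂q := by
    intro t ht
    have hsub : Icc 0 t ⊆ Icc 0 T := Icc_subset_Icc le_rfl ht.2
    refine integral_abs_le_mul_intervalIntegral_of_forall_abs_le ht.1 hu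
      (fun s hs => hM s (hsub hs)) h0 fun r => ?_
    have hF_cont : ContinuousOn (fun s => A * |u s r| + B * ∫ r', |u s r'| ∂q) (Icc 0 T) :=
      (continuousOn_const.mul (hu_cont r).abs).add (continuousOn_const.mul hD_cont)
    have h := abs_sub_le_intervalIntegral_of_abs_deriv_le ht.1 ((hu_cont r).mono hsub)
      (fun x hx => (hu' r x (hsub (Ioo_subset_Icc_self hx))).mono_of_mem_nhdsWithin
        (Icc_mem_nhdsGT_of_mem ⟨hx.1.le, hx.2.trans_le ht.2⟩))
      (hF_cont.mono hsub).integrableOn_Icc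
      (fun x hx => hbound r x (hsub (Ioo_subset_Icc_self hx)))
    linarith [abs_sub_abs_le_abs_sub (u t r) (u 0 r)]
  have hD_eq := eq_zero_of_le_mul_intervalIntegral hD_cont
    (fun t _ => integral_nonneg fun r => abs_nonneg _) hD_le
  intro t ht
  have hu_int : Integrable (fun r => |u t r|) q :=
    .of_bound (hu_meas t).aestronglyMeasurable M (hu_abs_bdd t ht)
  filter_upwards [(integral_eq_zero_iff_of_nonneg (fun r => abs_nonneg _) hu_int).1
    (hD_eq t ht)] with r hr using abs_eq_zero.1 hr

theorem abs_mul_sub_mul_sub_le {φ : ℝ → ℝ} {L : NNReal} (hφ : LipschitzWith L φ)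
    {p p' a a' x x' C Cφ : ℝ} (hp : p ∈ Icc (0:ℝ) 1) (hp' : p' ∈ Icc (0:ℝ) 1)
    (ha' : |a'| ≤ C) (hφx : |φ x| ≤ Cφ) :
    |((1 - p) * a - p * φ x) - ((1 - p') * a' - p' * φ x')|
      ≤ (C + Cφ) * |p - p'| + |a - a'| + L * |x - x'| := by
  have hLip : |φ x - φ x'| ≤ L * |x - x'| := by
    simpa only [Real.dist_eq] using hφ.dist_le_mul x x'
  have h1 : |(1 - p) * (a - a')| ≤ |a - a'| := by
    rw [abs_mul]
    exact mul_le_of_le_one_left (abs_nonneg _) (abs_le.2 ⟨by linarith [hp.2], by linarith [hp.1]⟩)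
  have h2 : |(p - p') * a'| ≤ |p - p'| * C := by
    rw [abs_mul]; gcongr
  have h3 : |(p - p') * φ x| ≤ |p - p'| * Cφ := by
    rw [abs_mul]; gcongr
  have h4 : |p' * (φ x - φ x')| ≤ L * |x - x'| := by
    rw [abs_mul]
    exact (mul_le_of_le_one_left (abs_nonneg _) (abs_le.2 ⟨by linarith [hp'.1], hp'.2⟩)).trans hLip
  have hsplit : ((1 - p) * a - p * φ x) - ((1 - p') * a' - p' * φ x')
      = (1 - p) * (a - a') - (p - p') * a' - (p - p') * φ x - p' * (φ x - φ x') := by ring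
  rw [hsplit, abs_le]
  constructor <;> linarith [abs_le.1 h1, abs_le.1 h2, abs_le.1 h3, abs_le.1 h4]

section Kernel

variable {α : Type*} [MeasurableSpace α] {μ : Measure α}

theorem abs_integral_mul_sub_integral_mul_le {k u v : α → ℝ} {C : ℝ}
    (hk : AEStronglyMeasurable k μ) (hkC : ∀ x, |k x| ≤ C) (hu : Integrable u μ)
    (hv : Integrable v μ) :
    |∫ x, k x * u x ∂μ - ∫ x, k x * v x ∂μ| ≤ C * ∫ x, |u x - v x| ∂μ := by
  have hkC' : ∀ᵐ x ∂μ, ‖k x‖ ≤ C := Eventually.of_forall hkC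
  have hku : Integrable (fun x => k x * u x) μ := hu.bdd_mul hk hkC'
  have hkv : Integrable (fun x => k x * v x) μ := hv.bdd_mul hk hkC'
  rw [← integral_sub hku hkv, ← integral_const_mul C fun x => |u x - v x|,
    ← Real.norm_eq_abs]
  refine norm_integral_le_of_norm_le ((hu.sub hv).abs.const_mul C)
    (Eventually.of_forall fun x => ?_)
  rw [← mul_sub, Real.norm_eq_abs, abs_mul]
  exact mul_le_mul_of_nonneg_right (hkC x) (abs_nonneg _)

theorem abs_integral_mul_le [IsProbabilityMeasure μ] {k u : α → ℝ} {C : ℝ}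
    (hkC : ∀ x, |k x| ≤ C) (hu : ∀ x, |u x| ≤ 1) :
    |∫ x, k x * u x ∂μ| ≤ C := by
  simpa using norm_integral_le_of_norm_le_const (μ := μ) (Eventually.of_forall fun x =>
    show ‖k x * u x‖ ≤ C by
      rw [Real.norm_eq_abs, abs_mul]
      exact (mul_le_of_le_one_right (abs_nonneg _) (hu x)).trans (hkC x))

end Kernel

section ForestGrass

variable {Γ : Type*} [MeasurableSpace Γ]

noncomputable def forestGrassField (q : Measure Γ) (J W : Γ → Γ → ℝ) (φ : ℝ → ℝ) (p : Γ → ℝ)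
    (r : Γ) : ℝ :=
  (1 - p r) * (∫ r', J r' r * p r' ∂q) - p r * φ (∫ r', W r' r * (1 - p r') ∂q)

theorem abs_forestGrassField_sub_le {q : Measure Γ} [IsProbabilityMeasure q] {J W : Γ → Γ → ℝ}
    {φ : ℝ → ℝ} {L : NNReal} {CJ CW Cφ : ℝ}
    (hJ : ∀ r, Measurable fun r' => J r' r) (hW : ∀ r, Measurable fun r' => W r' r)
    (hJC : ∀ r r', |J r r'| ≤ CJ) (hWC : ∀ r r', |W r r'| ≤ CW)
    (hφ : LipschitzWith L φ) (hφC : ∀ x, |φ x| ≤ Cφ)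
    {p p' : Γ → ℝ} (hp : Measurable p) (hp' : Measurable p')
    (hp01 : ∀ r, p r ∈ Icc (0:ℝ) 1) (hp'01 : ∀ r, p' r ∈ Icc (0:ℝ) 1) (r : Γ) :
    |forestGrassField q J W φ p r - forestGrassField q J W φ p' r|
      ≤ (CJ + Cφ) * |p r - p' r| + (CJ + L * CW) * ∫ r', |p r' - p' r'| ∂q := by
  have hint : ∀ {f : Γ → ℝ}, Measurable f → (∀ r, f r ∈ Icc (0:ℝ) 1) → Integrable f q :=
    fun hf hf01 => .of_bound hf.aestronglyMeasurable 1 (Eventually.of_forall fun r =>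
      abs_le.2 ⟨by linarith [(hf01 r).1], (hf01 r).2⟩)
  have hJdiff := abs_integral_mul_sub_integral_mul_le (hJ r).aestronglyMeasurable (hJC · r)
    (hint hp hp01) (hint hp' hp'01)
  have hWdiff := abs_integral_mul_sub_integral_mul_le (hW r).aestronglyMeasurable (hWC · r)
    (u := fun r' => 1 - p r') (v := fun r' => 1 - p' r')
    ((integrable_const 1).sub (hint hp hp01)) ((integrable_const 1).sub (hint hp' hp'01))
  simp only [sub_sub_sub_cancel_left, abs_sub_comm (p' _)] at hWdiff
  have hJp' : |∫ r', J r' r * p' r' ∂q| ≤ CJ := abs_integral_mul_le (hJC · r)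
    fun r' => abs_le.2 ⟨by linarith [(hp'01 r').1], (hp'01 r').2⟩
  have hmain := abs_mul_sub_mul_sub_le (a := ∫ r', J r' r * p r' ∂q)
    (x' := ∫ r', W r' r * (1 - p' r') ∂q) hφ (hp01 r) (hp'01 r) hJp'
    (hφC (∫ r', W r' r * (1 - p r') ∂q))
  have hL := mul_le_mul_of_nonneg_left hWdiff L.coe_nonneg
  unfold forestGrassField
  linarith

end ForestGrass

theorem forest_grass_ide_uniqueness_general
    {Γ : Type*} [MeasurableSpace Γ]
    (q : Measure Γ) [IsProbabilityMeasure q]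
    (J W : Γ → Γ → ℝ)
    (hJmeas : Measurable fun p : Γ × Γ => J p.1 p.2)
    (hWmeas : Measurable fun p : Γ × Γ => W p.1 p.2)
    (CJ CW : ℝ) (hJbdd : ∀ r r' : Γ, |J r r'| ≤ CJ) (hWbdd : ∀ r r' : Γ, |W r r'| ≤ CW)
    (φ : ℝ → ℝ) (L : NNReal) (hφ : LipschitzWith L φ)
    (Cφ : ℝ) (hφbdd : ∀ x : ℝ, |φ x| ≤ Cφ)
    (T : ℝ)
    (P Q : ℝ → Γ → ℝ)
    (hPmeas : Measurable fun p : ℝ × Γ => P p.1 p.2)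
    (hQmeas : Measurable fun p : ℝ × Γ => Q p.1 p.2)
    (hPrange : ∀ t ∈ Icc (0:ℝ) T, ∀ r : Γ, P t r ∈ Icc (0:ℝ) 1)
    (hQrange : ∀ t ∈ Icc (0:ℝ) T, ∀ r : Γ, Q t r ∈ Icc (0:ℝ) 1)
    (hPeq : ∀ r : Γ, ∀ t ∈ Icc (0:ℝ) T,
      HasDerivWithinAt (fun s => P s r)
        ((1 - P t r) * (∫ r', J r' r * P t r' ∂q)
          - P t r * φ (∫ r', W r' r * (1 - P t r') ∂q)) (Icc (0:ℝ) T) t)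
    (hQeq : ∀ r : Γ, ∀ t ∈ Icc (0:ℝ) T,
      HasDerivWithinAt (fun s => Q s r)
        ((1 - Q t r) * (∫ r', J r' r * Q t r' ∂q)
          - Q t r * φ (∫ r', W r' r * (1 - Q t r') ∂q)) (Icc (0:ℝ) T) t)
    (hinit : ∀ᵐ r ∂q, P 0 r = Q 0 r) :
    ∀ t ∈ Icc (0:ℝ) T, ∀ᵐ r ∂q, P t r = Q t r := by
  have hJ : ∀ r, Measurable fun r' => J r' r := fun r =>
    hJmeas.comp (measurable_id.prodMk measurable_const)
  have hW : ∀ r, Measurable fun r' => W r' r := fun r =>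
    hWmeas.comp (measurable_id.prodMk measurable_const)
  have hdiff := ae_eq_zero_of_abs_deriv_le (q := q) (u := fun t r => P t r - Q t r) (M := 1)
    (u' := fun t r => forestGrassField q J W φ (P t) r - forestGrassField q J W φ (Q t) r)
    (hPmeas.sub hQmeas)
    (fun t ht r => abs_sub_le_iff.2
      ⟨by linarith [(hPrange t ht r).2, (hQrange t ht r).1],
        by linarith [(hPrange t ht r).1, (hQrange t ht r).2]⟩)
    (fun r t ht => (hPeq r t ht).sub (hQeq r t ht))
    (fun r t ht => abs_forestGrassField_sub_le hJ hW hJbdd hWbdd hφ hφbdd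
      (hPmeas.comp measurable_prodMk_left) (hQmeas.comp measurable_prodMk_left)
      (hPrange t ht) (hQrange t ht) r)
    (hinit.mono fun r hr => sub_eq_zero.2 hr)
  intro t ht
  filter_upwards [hdiff t ht] with r hr using sub_eq_zero.1 hr

/-- Uniqueness for the forest-grass integro-differential equation (the
generalized Kolmogorov equation of the mesoscale mean-field limit): any two `[0,1]`-valued,
jointly measurable, time-continuous, time-differentiable solutions that agree `q`-a.e. at
time `0` agree `q`-a.e. at every time `t ∈ [0,T]`. -/
theorem forest_grass_ide_uniqueness
    {Γ : Type*} [MeasurableSpace Γ]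
    (q : Measure Γ) [IsProbabilityMeasure q]
    (J W : Γ → Γ → ℝ)
    (hJmeas : Measurable fun p : Γ × Γ => J p.1 p.2)
    (hWmeas : Measurable fun p : Γ × Γ => W p.1 p.2)
    (CJ CW : ℝ) (hJbdd : ∀ r r' : Γ, |J r r'| ≤ CJ) (hWbdd : ∀ r r' : Γ, |W r r'| ≤ CW)
    (φ : ℝ → ℝ) (L : NNReal) (hφ : LipschitzWith L φ)
    (Cφ : ℝ) (hφbdd : ∀ x : ℝ, |φ x| ≤ Cφ)
    (T : ℝ) (hT : 0 < T)
    (P Q : ℝ → Γ → ℝ)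
    (hPmeas : Measurable fun p : ℝ × Γ => P p.1 p.2)
    (hQmeas : Measurable fun p : ℝ × Γ => Q p.1 p.2)
    (hPrange : ∀ t ∈ Icc (0:ℝ) T, ∀ r : Γ, P t r ∈ Icc (0:ℝ) 1)
    (hQrange : ∀ t ∈ Icc (0:ℝ) T, ∀ r : Γ, Q t r ∈ Icc (0:ℝ) 1)
    (hPcont : ∀ r : Γ, ContinuousOn (fun t => P t r) (Icc (0:ℝ) T))
    (hQcont : ∀ r : Γ, ContinuousOn (fun t => Q t r) (Icc (0:ℝ) T))
    (hPeq : ∀ r : Γ, ∀ t ∈ Icc (0:ℝ) T,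
      HasDerivWithinAt (fun s => P s r)
        ((1 - P t r) * (∫ r', J r' r * P t r' ∂q)
          - P t r * φ (∫ r', W r' r * (1 - P t r') ∂q)) (Icc (0:ℝ) T) t)
    (hQeq : ∀ r : Γ, ∀ t ∈ Icc (0:ℝ) T,
      HasDerivWithinAt (fun s => Q s r)
        ((1 - Q t r) * (∫ r', J r' r * Q t r' ∂q)
          - Q t r * φ (∫ r', W r' r * (1 - Q t r') ∂q)) (Icc (0:ℝ) T) t)
    (hinit : ∀ᵐ r ∂q, P 0 r = Q 0 r) :
    ∀ t ∈ Icc (0:ℝ) T, ∀ᵐ r ∂q, P t r = Q t r :=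
  forest_grass_ide_uniqueness_general q J W hJmeas hWmeas CJ CW hJbdd hWbdd φ L hφ Cφ hφbdd T P Q
    hPmeas hQmeas hPrange hQrange hPeq hQeq hinit
end

section
/- Let φ, ω : ℝ → ℝ be Lipschitz continuous and nonnegative, and let μ, ν, α, β ≥ 0. For every initial point (G₀,S₀,T₀,F₀) in the simplex Δ = {(G,S,T,F) ∈ ℝ⁴ : G,S,T,F ≥ 0, G+S+T+F = 1}, the Staver-Levin ODE system Ġ = μS + νT + φ(G)F − βGT − αGF, Ṡ = βGT − αSF − ω(G)S − μS, Ṫ = −νT − αTF + ω(G)S, Ḟ = αF(G+S+T) − φ(G)F has a unique solution defined for all t ≥ 0, and this solution remains in Δ for all t ≥ 0. -/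
/-!
Cut the vector field off outside the unit cube `[0,1]⁴`: the cut-off field is globally Lipschitz
and bounded, so it has a solution for all `t ≥ 0`. Its coordinates sum to zero, and a coordinate
of the field is nonnegative wherever the corresponding coordinate of the state is negative; hence
a solution starting in the simplex stays there, where the cut-off does nothing, and it solves the
Staver-Levin system. Uniqueness holds because the field is locally Lipschitz and a trajectory on a
compact time interval stays in a compact set.
-/

open Set

/-- The Staver-Levin ODE system, as a property of four functions on `[0,∞)`. -/
def IsStaverLevinSolution (φ ω : ℝ → ℝ) (μ ν α β : ℝ) (G S T F : ℝ → ℝ) : Prop :=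
  ∀ t ∈ Ici (0:ℝ),
    HasDerivWithinAt G
      (μ * S t + ν * T t + φ (G t) * F t - β * G t * T t - α * G t * F t) (Ici 0) t ∧
    HasDerivWithinAt S
      (β * G t * T t - α * S t * F t - ω (G t) * S t - μ * S t) (Ici 0) t ∧
    HasDerivWithinAt T
      (-(ν * T t) - α * T t * F t + ω (G t) * S t) (Ici 0) t ∧
    HasDerivWithinAt F
      (α * F t * (G t + S t + T t) - φ (G t) * F t) (Ici 0) t

open Filter Topology
open scoped NNReal

theorem LocallyLipschitz.exists_lipschitzWith_comp {α β γ : Type*} [PseudoMetricSpace α]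
    [PseudoMetricSpace β] [PseudoMetricSpace γ] {f : β → γ} {g : α → β}
    (hf : LocallyLipschitz f) {Kg : ℝ≥0} (hg : LipschitzWith Kg g) {s : Set β}
    (hs : IsCompact s) (hgs : ∀ x, g x ∈ s) : ∃ K, LipschitzWith K (f ∘ g) := by
  obtain ⟨K, hK⟩ := hf.locallyLipschitzOn.exists_lipschitzOnWith_of_compact hs
  exact ⟨K * Kg, lipschitzOnWith_univ.1 (hK.comp hg.lipschitzOnWith fun x _ => hgs x)⟩

theorem nonneg_of_hasDerivWithinAt_Ici {g g' : ℝ → ℝ} {a : ℝ}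
    (hg : ∀ t ∈ Ici a, HasDerivWithinAt g (g' t) (Ici a) t) (ha : 0 ≤ g a)
    (hg' : ∀ t ∈ Ici a, g t < 0 → 0 ≤ g' t) : ∀ t ∈ Ici a, 0 ≤ g t := by
  intro t ht
  -- `-g` stays below each strictly increasing barrier `ε * (s - a + 1)`.
  have hbarrier : ∀ ε > 0, -g t ≤ ε * (t - a + 1) := fun ε hε =>
    image_le_of_deriv_right_lt_deriv_boundary (f := fun s => -g s)
      (B := fun s => ε * (s - a + 1)) (B' := fun _ => ε)
      (fun s hs => (hg s hs.1).continuousWithinAt.neg.mono Icc_subset_Ici_self)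
      (fun s hs => (hg s hs.1).neg.mono (Ici_subset_Ici.2 hs.1))
      (by simp only [sub_self, zero_add, mul_one]; linarith)
      (fun s => by simpa using (((hasDerivAt_id s).sub_const a).add_const 1).const_mul ε)
      (fun s hs heq => by
        have hpos : 0 < ε * (s - a + 1) := mul_pos hε (by linarith [hs.1])
        linarith [hg' s hs.1 (by linarith)])
      ⟨ht, le_rfl⟩
  by_contra! hneg
  have hlen : 0 < t - a + 1 := by linarith [mem_Ici.1 ht]
  have hhalf : -g t / (2 * (t - a + 1)) * (t - a + 1) = -g t / 2 := by field_simp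
  linarith [hbarrier (-g t / (2 * (t - a + 1))) (div_pos (by linarith) (by linarith))]

theorem sum_eq_of_hasDerivWithinAt_Ici {ι : Type*} [Fintype ι] {X X' : ℝ → ι → ℝ} {a : ℝ}
    (hX : ∀ t ∈ Ici a, HasDerivWithinAt X (X' t) (Ici a) t) (hX' : ∀ t ∈ Ici a, ∑ i, X' t i = 0) :
    ∀ t ∈ Ici a, ∑ i, X t i = ∑ i, X a i := by
  have hsum : ∀ t ∈ Ici a, HasDerivWithinAt (fun s => ∑ i, X s i) 0 (Ici a) t := fun t ht =>
    hX' t ht ▸ HasDerivWithinAt.fun_sum fun i _ => hasDerivWithinAt_pi.1 (hX t ht) i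
  exact fun t ht => constant_of_has_deriv_right_zero
    (fun s hs => (hsum s hs.1).continuousWithinAt.mono Icc_subset_Ici_self)
    (fun s hs => (hsum s hs.1).mono (Ici_subset_Ici.2 hs.1)) t ⟨ht, le_rfl⟩

section AutonomousODE

variable {E : Type*} [NormedAddCommGroup E] [NormedSpace ℝ E] {v : E → E}

theorem eqOn_Icc_of_hasDerivWithinAt_of_locallyLipschitz (hv : LocallyLipschitz v)
    {X Y : ℝ → E} {a b : ℝ} (hX : ∀ t ∈ Icc a b, HasDerivWithinAt X (v (X t)) (Icc a b) t)
    (hY : ∀ t ∈ Icc a b, HasDerivWithinAt Y (v (Y t)) (Icc a b) t) (ha : X a = Y a) :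
    EqOn X Y (Icc a b) := by
  have hXc : ContinuousOn X (Icc a b) := fun t ht => (hX t ht).continuousWithinAt
  have hYc : ContinuousOn Y (Icc a b) := fun t ht => (hY t ht).continuousWithinAt
  obtain ⟨K, hK⟩ := hv.locallyLipschitzOn.exists_lipschitzOnWith_of_compact
    ((isCompact_Icc.image_of_continuousOn hXc).union (isCompact_Icc.image_of_continuousOn hYc))
  have hright : ∀ Z : ℝ → E, (∀ t ∈ Icc a b, HasDerivWithinAt Z (v (Z t)) (Icc a b) t) →
      ∀ t ∈ Ico a b, HasDerivWithinAt Z (v (Z t)) (Ici t) t := fun Z hZ t ht =>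
    (hZ t (Ico_subset_Icc_self ht)).mono_of_mem_nhdsWithin (Icc_mem_nhdsGE_of_mem ht)
  exact ODE_solution_unique_of_mem_Icc_right (v := fun _ => v) (fun _ _ => hK)
    hXc (hright X hX) (fun _ ht => .inl (mem_image_of_mem X (Ico_subset_Icc_self ht)))
    hYc (hright Y hY) (fun _ ht => .inr (mem_image_of_mem Y (Ico_subset_Icc_self ht))) ha

theorem eqOn_Ici_of_hasDerivWithinAt_of_locallyLipschitz (hv : LocallyLipschitz v)
    {X Y : ℝ → E} {a : ℝ} (hX : ∀ t ∈ Ici a, HasDerivWithinAt X (v (X t)) (Ici a) t)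
    (hY : ∀ t ∈ Ici a, HasDerivWithinAt Y (v (Y t)) (Ici a) t) (ha : X a = Y a) :
    EqOn X Y (Ici a) := fun _ ht =>
  eqOn_Icc_of_hasDerivWithinAt_of_locallyLipschitz hv
    (fun s hs => (hX s hs.1).mono Icc_subset_Ici_self)
    (fun s hs => (hY s hs.1).mono Icc_subset_Ici_self) ha (right_mem_Icc.2 ht)

variable [CompleteSpace E] {K : ℝ≥0} {C : ℝ}

theorem exists_hasDerivWithinAt_Icc_of_lipschitzWith (hv : LipschitzWith K v)
    (hC : ∀ x, ‖v x‖ ≤ C) (x₀ : E) {T : ℝ} (hT : 0 ≤ T) :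
    ∃ X : ℝ → E, X 0 = x₀ ∧ ∀ t ∈ Icc 0 T, HasDerivWithinAt X (v (X t)) (Icc 0 T) t := by
  have hPL : IsPicardLindelof (fun _ => v) (⟨0, left_mem_Icc.2 hT⟩ : Icc 0 T) x₀
      (C.toNNReal * T.toNNReal) 0 C.toNNReal K :=
    .of_time_independent (fun x _ => (hC x).trans (Real.le_coe_toNNReal C)) hv.lipschitzOnWith
      (by simp [hT])
  exact hPL.exists_eq_forall_mem_Icc_hasDerivWithinAt₀

theorem exists_hasDerivWithinAt_Ici_of_lipschitzWith (hv : LipschitzWith K v)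
    (hC : ∀ x, ‖v x‖ ≤ C) (x₀ : E) :
    ∃ X : ℝ → E, X 0 = x₀ ∧ ∀ t ∈ Ici (0:ℝ), HasDerivWithinAt X (v (X t)) (Ici 0) t := by
  choose Xn hXn0 hXn using fun n : ℕ =>
    exists_hasDerivWithinAt_Icc_of_lipschitzWith hv hC x₀ (n.cast_add_one_pos (α := ℝ)).le
  have hagree : ∀ {m n : ℕ}, m ≤ n → EqOn (Xn m) (Xn n) (Icc 0 (m + 1)) := fun {m n} hmn => by
    have hsub : Icc (0:ℝ) (m + 1) ⊆ Icc 0 (n + 1) :=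
      Icc_subset_Icc_right (by exact_mod_cast Nat.add_le_add_right hmn 1)
    exact eqOn_Icc_of_hasDerivWithinAt_of_locallyLipschitz hv.locallyLipschitz (hXn m)
      (fun t ht => (hXn n t (hsub ht)).mono hsub) (by rw [hXn0, hXn0])
  refine ⟨fun t => Xn ⌊t⌋₊ t, by simp [hXn0], fun t ht => ?_⟩
  have hIcc : Icc (0:ℝ) (⌊t⌋₊ + 1) ∈ 𝓝[Ici 0] t := by
    rw [← Ici_inter_Iic]
    exact inter_mem_nhdsWithin _ (Iic_mem_nhds (Nat.lt_floor_add_one t))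
  have heq : (fun u => Xn ⌊u⌋₊ u) =ᶠ[𝓝[Ici 0] t] Xn ⌊t⌋₊ := by
    filter_upwards [hIcc] with u hu
    rcases le_total ⌊u⌋₊ ⌊t⌋₊ with h | h
    · exact hagree h ⟨hu.1, (Nat.lt_floor_add_one u).le⟩
    · exact (hagree h hu).symm
  exact ((hXn _ t ⟨ht, (Nat.lt_floor_add_one t).le⟩).mono_of_mem_nhdsWithin hIcc)
    |>.congr_of_eventuallyEq heq rfl

end AutonomousODE

section UnitCube

variable {ι : Type*}

def projUnitCube (x : ι → ℝ) : ι → ℝ := fun i => max 0 (min 1 (x i))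

theorem projUnitCube_mem_Icc (x : ι → ℝ) : projUnitCube x ∈ Icc 0 1 :=
  ⟨fun _ => le_max_left _ _, fun _ => max_le zero_le_one (min_le_left _ _)⟩

theorem projUnitCube_of_mem {x : ι → ℝ} (hx : x ∈ Icc 0 1) : projUnitCube x = x :=
  funext fun i => by
    rw [projUnitCube, min_eq_right (show x i ≤ 1 from hx.2 i),
      max_eq_right (show 0 ≤ x i from hx.1 i)]

theorem projUnitCube_apply_of_nonpos {x : ι → ℝ} {i : ι} (hi : x i ≤ 0) :
    projUnitCube x i = 0 :=
  max_eq_left ((min_le_right _ _).trans hi)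

theorem lipschitzWith_projUnitCube [Fintype ι] : LipschitzWith 1 (projUnitCube (ι := ι)) :=
  fun x y => by
    rw [ENNReal.coe_one, one_mul, edist_pi_le_iff]
    exact fun i => ((LipschitzWith.id.const_min 1).const_max 0).edist_le_mul (x i) (y i)
      |>.trans_eq (one_mul _) |>.trans (edist_le_pi_edist x y i)

end UnitCube

section StaverLevin

/-- The coordinates `0, 1, 2, 3` stand for `G, S, T, F`. -/
def staverLevinField (φ ω : ℝ → ℝ) (μ ν α β : ℝ) (x : Fin 4 → ℝ) : Fin 4 → ℝ :=
  ![μ * x 1 + ν * x 2 + φ (x 0) * x 3 - β * x 0 * x 2 - α * x 0 * x 3,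
    β * x 0 * x 2 - α * x 1 * x 3 - ω (x 0) * x 1 - μ * x 1,
    -(ν * x 2) - α * x 2 * x 3 + ω (x 0) * x 1,
    α * x 3 * (x 0 + x 1 + x 2) - φ (x 0) * x 3]

variable {φ ω : ℝ → ℝ} {μ ν α β : ℝ}

theorem staverLevinField_locallyLipschitz (hφ : LocallyLipschitz φ) (hω : LocallyLipschitz ω) :
    LocallyLipschitz (staverLevinField φ ω μ ν α β) := by
  -- `φ` and `ω` enter only through `x 0`: the field is polynomial in `(φ (x 0), ω (x 0), x)`.
  have hpoly : ContDiff ℝ 1 fun p : ℝ × ℝ × (Fin 4 → ℝ) =>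
      staverLevinField (fun _ => p.1) (fun _ => p.2.1) μ ν α β p.2.2 := by
    refine contDiff_pi.2 fun i => ?_
    fin_cases i <;>
      simp only [staverLevinField, Fin.zero_eta, Fin.mk_one, Fin.reduceFinMk, Fin.isValue,
        Matrix.cons_val_zero, Matrix.cons_val_one, Matrix.cons_val] <;>
      fun_prop
  have hx₀ : LocallyLipschitz fun x : Fin 4 → ℝ => x 0 := (LipschitzWith.eval 0).locallyLipschitz
  exact (hpoly.locallyLipschitz.comp ((hφ.comp hx₀).prodMk ((hω.comp hx₀).prodMk .id)) :)

theorem sum_staverLevinField (x : Fin 4 → ℝ) : ∑ i, staverLevinField φ ω μ ν α β x i = 0 := by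
  simp only [staverLevinField, Fin.sum_univ_four, Fin.isValue, Matrix.cons_val_zero,
    Matrix.cons_val_one, Matrix.cons_val]
  ring

theorem staverLevinField_nonneg_of_eq_zero (hφ : ∀ y, 0 ≤ φ y) (hω : ∀ y, 0 ≤ ω y)
    (hμ : 0 ≤ μ) (hν : 0 ≤ ν) (hβ : 0 ≤ β) {x : Fin 4 → ℝ} (hx : 0 ≤ x) {i : Fin 4}
    (hi : x i = 0) : 0 ≤ staverLevinField φ ω μ ν α β x i := by
  have h0 : 0 ≤ x 0 := hx 0
  have h1 : 0 ≤ x 1 := hx 1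
  have h2 : 0 ≤ x 2 := hx 2
  have h3 : 0 ≤ x 3 := hx 3
  have hφ0 := hφ 0
  have hωx := hω (x 0)
  fin_cases i <;> simp only [Fin.zero_eta, Fin.mk_one, Fin.reduceFinMk, Fin.isValue] at hi ⊢ <;>
    simp only [staverLevinField, hi, Matrix.cons_val_zero, Matrix.cons_val_one, Matrix.cons_val,
      mul_zero, zero_mul, add_zero, zero_add, sub_zero, zero_sub, neg_zero, sub_self, le_refl] <;>
    positivity

theorem isStaverLevinSolution_iff {G S T F : ℝ → ℝ} :
    IsStaverLevinSolution φ ω μ ν α β G S T F ↔ ∀ t ∈ Ici (0:ℝ),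
      HasDerivWithinAt (fun t => ![G t, S t, T t, F t])
        (staverLevinField φ ω μ ν α β ![G t, S t, T t, F t]) (Ici 0) t := by
  simp [IsStaverLevinSolution, hasDerivWithinAt_pi, Fin.forall_fin_succ, staverLevinField]

theorem mem_stdSimplex_fin_four_iff {a b c d : ℝ} :
    ![a, b, c, d] ∈ stdSimplex ℝ (Fin 4) ↔
      0 ≤ a ∧ 0 ≤ b ∧ 0 ≤ c ∧ 0 ≤ d ∧ a + b + c + d = 1 := by
  simp [stdSimplex, Fin.forall_fin_succ, Fin.sum_univ_four, and_assoc]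

theorem exists_staverLevin_trajectory_mem_stdSimplex (hφ : LocallyLipschitz φ)
    (hω : LocallyLipschitz ω) (hφnn : ∀ y, 0 ≤ φ y) (hωnn : ∀ y, 0 ≤ ω y) (hμ : 0 ≤ μ)
    (hν : 0 ≤ ν) (hβ : 0 ≤ β) {x₀ : Fin 4 → ℝ} (hx₀ : x₀ ∈ stdSimplex ℝ (Fin 4)) :
    ∃ X : ℝ → Fin 4 → ℝ, X 0 = x₀ ∧ ∀ t ∈ Ici (0:ℝ), X t ∈ stdSimplex ℝ (Fin 4) ∧
      HasDerivWithinAt X (staverLevinField φ ω μ ν α β (X t)) (Ici 0) t := by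
  have hv := staverLevinField_locallyLipschitz (μ := μ) (ν := ν) (α := α) (β := β) hφ hω
  obtain ⟨K, hK⟩ :=
    hv.exists_lipschitzWith_comp lipschitzWith_projUnitCube isCompact_Icc projUnitCube_mem_Icc
  obtain ⟨C, hC⟩ := isCompact_Icc.exists_bound_of_continuousOn hv.continuous.continuousOn
  obtain ⟨X, hX0, hX⟩ := exists_hasDerivWithinAt_Ici_of_lipschitzWith hK
    (fun x => hC _ (projUnitCube_mem_Icc x)) x₀
  have hnonneg : ∀ t ∈ Ici (0:ℝ), 0 ≤ X t := fun t ht i =>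
    nonneg_of_hasDerivWithinAt_Ici (fun s hs => hasDerivWithinAt_pi.1 (hX s hs) i)
      (hX0 ▸ hx₀.1 i)
      (fun s _ hs => staverLevinField_nonneg_of_eq_zero hφnn hωnn hμ hν hβ
        (projUnitCube_mem_Icc _).1 (projUnitCube_apply_of_nonpos hs.le)) t ht
  have hsum : ∀ t ∈ Ici (0:ℝ), ∑ i, X t i = 1 := fun t ht => by
    rw [sum_eq_of_hasDerivWithinAt_Ici hX (fun s _ => sum_staverLevinField _) t ht, hX0, hx₀.2]
  have hΔ : ∀ t ∈ Ici (0:ℝ), X t ∈ stdSimplex ℝ (Fin 4) := fun t ht => ⟨hnonneg t ht, hsum t ht⟩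
  refine ⟨X, hX0, fun t ht => ⟨hΔ t ht, ?_⟩⟩
  simpa [projUnitCube_of_mem (stdSimplex_subset_Icc ℝ (hΔ t ht))] using hX t ht

end StaverLevin

theorem staver_levin_wellposed_simplex_general
    (φ ω : ℝ → ℝ) (Kφ Kω : NNReal)
    (hφ : LipschitzWith Kφ φ) (hω : LipschitzWith Kω ω)
    (hφnn : ∀ x : ℝ, 0 ≤ φ x) (hωnn : ∀ x : ℝ, 0 ≤ ω x)
    (μ ν α β : ℝ) (hμ : 0 ≤ μ) (hν : 0 ≤ ν) (hβ : 0 ≤ β)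
    (G₀ S₀ T₀ F₀ : ℝ)
    (h0 : 0 ≤ G₀ ∧ 0 ≤ S₀ ∧ 0 ≤ T₀ ∧ 0 ≤ F₀ ∧ G₀ + S₀ + T₀ + F₀ = 1) :
    ∃ G S T F : ℝ → ℝ,
      (G 0 = G₀ ∧ S 0 = S₀ ∧ T 0 = T₀ ∧ F 0 = F₀) ∧
      IsStaverLevinSolution φ ω μ ν α β G S T F ∧
      (∀ t ∈ Ici (0:ℝ),
        0 ≤ G t ∧ 0 ≤ S t ∧ 0 ≤ T t ∧ 0 ≤ F t ∧ G t + S t + T t + F t = 1) ∧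
      (∀ G' S' T' F' : ℝ → ℝ,
        (G' 0 = G₀ ∧ S' 0 = S₀ ∧ T' 0 = T₀ ∧ F' 0 = F₀) →
        IsStaverLevinSolution φ ω μ ν α β G' S' T' F' →
        ∀ t ∈ Ici (0:ℝ), G' t = G t ∧ S' t = S t ∧ T' t = T t ∧ F' t = F t) := by
  obtain ⟨X, hX0, hX⟩ := exists_staverLevin_trajectory_mem_stdSimplex (α := α)
    hφ.locallyLipschitz hω.locallyLipschitz hφnn hωnn hμ hν hβ (mem_stdSimplex_fin_four_iff.2 h0)
  have hXeta : ∀ t, ![X t 0, X t 1, X t 2, X t 3] = X t := fun t => by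
    ext i; fin_cases i <;> rfl
  refine ⟨fun t => X t 0, fun t => X t 1, fun t => X t 2, fun t => X t 3, by simp [hX0],
    isStaverLevinSolution_iff.2 fun t ht => by simpa only [hXeta] using (hX t ht).2,
    fun t ht => mem_stdSimplex_fin_four_iff.1 ((hXeta t).symm ▸ (hX t ht).1), ?_⟩
  intro G' S' T' F' h0' hsol' t ht
  have hY0 : ![G' 0, S' 0, T' 0, F' 0] = X 0 := by simp [hX0, h0']
  have hYX := eqOn_Ici_of_hasDerivWithinAt_of_locallyLipschitz
    (staverLevinField_locallyLipschitz hφ.locallyLipschitz hω.locallyLipschitz)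
    (isStaverLevinSolution_iff.1 hsol') (fun s hs => (hX s hs).2) hY0 ht
  exact ⟨congrFun hYX 0, congrFun hYX 1, congrFun hYX 2, congrFun hYX 3⟩

/-- For Lipschitz nonnegative `φ, ω` and nonnegative parameters, the
Staver-Levin ODE system has, for every initial point in the probability simplex
`Δ = {(G,S,T,F) : G,S,T,F ≥ 0, G+S+T+F = 1}`, a solution defined for all `t ≥ 0` which
remains in `Δ`, and any two solutions with this initial point agree for all `t ≥ 0`. -/
theorem staver_levin_wellposed_simplex
    (φ ω : ℝ → ℝ) (Kφ Kω : NNReal)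
    (hφ : LipschitzWith Kφ φ) (hω : LipschitzWith Kω ω)
    (hφnn : ∀ x : ℝ, 0 ≤ φ x) (hωnn : ∀ x : ℝ, 0 ≤ ω x)
    (μ ν α β : ℝ) (hμ : 0 ≤ μ) (hν : 0 ≤ ν) (hα : 0 ≤ α) (hβ : 0 ≤ β)
    (G₀ S₀ T₀ F₀ : ℝ)
    (h0 : 0 ≤ G₀ ∧ 0 ≤ S₀ ∧ 0 ≤ T₀ ∧ 0 ≤ F₀ ∧ G₀ + S₀ + T₀ + F₀ = 1) :
    ∃ G S T F : ℝ → ℝ,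
      (G 0 = G₀ ∧ S 0 = S₀ ∧ T 0 = T₀ ∧ F 0 = F₀) ∧
      IsStaverLevinSolution φ ω μ ν α β G S T F ∧
      (∀ t ∈ Ici (0:ℝ),
        0 ≤ G t ∧ 0 ≤ S t ∧ 0 ≤ T t ∧ 0 ≤ F t ∧ G t + S t + T t + F t = 1) ∧
      (∀ G' S' T' F' : ℝ → ℝ,
        (G' 0 = G₀ ∧ S' 0 = S₀ ∧ T' 0 = T₀ ∧ F' 0 = F₀) →
        IsStaverLevinSolution φ ω μ ν α β G' S' T' F' →
        ∀ t ∈ Ici (0:ℝ), G' t = G t ∧ S' t = S t ∧ T' t = T t ∧ F' t = F t) :=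
  staver_levin_wellposed_simplex_general φ ω Kφ Kω hφ hω hφnn hωnn μ ν α β hμ hν hβ G₀ S₀ T₀ F₀ h0
end
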